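/- Let C be an equivalence class of left weak Bruhat intervals in S_n under descent-preserving isomorphism. Then the set min(C) = {σ : [σ, ρ]_L ∈ C} of minima of intervals in C is a right weak Bruhat interval in (S_n, ≤_R), and likewise the set max(C) = {ρ : [σ, ρ]_L ∈ C} of maxima is a right weak Bruhat interval. -/

import Mathlib

/-- The left inversion set `Inv_L(σ) = {(i,j) : i < j, σ(i) > σ(j)}`. -/
def InvL {n : ℕ} (σ : Equiv.Perm (Fin n)) : Set (Fin n × Fin n) :=
  {p | p.1 < p.2 ∧ σ p.2 < σ p.1}

/-- The left weak Bruhat order: `σ ≤_L ρ` iff `Inv_L(σ) ⊆ Inv_L(ρ)`. -/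
def lLE {n : ℕ} (σ ρ : Equiv.Perm (Fin n)) : Prop := InvL σ ⊆ InvL ρ

/-- The right inversion set `Inv_R(σ) = {(σ(i),σ(j)) : i < j, σ(i) > σ(j)}`. -/
def InvR {n : ℕ} (σ : Equiv.Perm (Fin n)) : Set (Fin n × Fin n) :=
  {p | p.2 < p.1 ∧ σ⁻¹ p.1 < σ⁻¹ p.2}

/-- The right weak Bruhat order: `σ ≤_R ρ` iff `Inv_R(σ) ⊆ Inv_R(ρ)`. -/
def rLE {n : ℕ} (σ ρ : Equiv.Perm (Fin n)) : Prop := InvR σ ⊆ InvR ρ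

/-- The left weak Bruhat interval `[σ, ρ]_L`. -/
def lInterval {n : ℕ} (σ ρ : Equiv.Perm (Fin n)) : Set (Equiv.Perm (Fin n)) :=
  {γ | lLE σ γ ∧ lLE γ ρ}

/-- The right weak Bruhat interval `[σ, ρ]_R`. -/
def rInterval {n : ℕ} (σ ρ : Equiv.Perm (Fin n)) : Set (Equiv.Perm (Fin n)) :=
  {γ | rLE σ γ ∧ rLE γ ρ}

/-- The Coxeter length of a permutation, i.e. its number of inversions. -/
def len {n : ℕ} (σ : Equiv.Perm (Fin n)) : ℕ :=
  (Finset.univ.filter fun p : Fin n × Fin n => p.1 < p.2 ∧ σ p.2 < σ p.1).card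

/-- The simple transposition `s_i` (swapping the adjacent values `i`, `i+1`). -/
def sgen {n : ℕ} (i : Fin n) : Equiv.Perm (Fin (n + 1)) :=
  Equiv.swap i.castSucc i.succ

/-- The left descent set `Des_L(σ) = {i : ℓ(s_i σ) < ℓ(σ)}`. -/
def DesL {n : ℕ} (σ : Equiv.Perm (Fin (n + 1))) : Set (Fin n) :=
  {i | len (sgen i * σ) < len σ}

/-- `[σ₁,ρ₁]_L` and `[σ₂,ρ₂]_L` are equivalent under descent-preserving poset
isomorphism. -/
def DPEquiv {n : ℕ} (σ₁ ρ₁ σ₂ ρ₂ : Equiv.Perm (Fin (n + 1))) : Prop :=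
  lLE σ₁ ρ₁ ∧ lLE σ₂ ρ₂ ∧
  ∃ f : Equiv.Perm (Fin (n + 1)) → Equiv.Perm (Fin (n + 1)),
    Set.BijOn f (lInterval σ₁ ρ₁) (lInterval σ₂ ρ₂) ∧
    (∀ x ∈ lInterval σ₁ ρ₁, ∀ y ∈ lInterval σ₁ ρ₁, (lLE x y ↔ lLE (f x) (f y))) ∧
    (∀ x ∈ lInterval σ₁ ρ₁, DesL (f x) = DesL x)

/-!
Every descent-preserving isomorphism `f : [σ, ρ]_L → [σ', ρ']_L` is the right translation
`x ↦ x * g` with `g = σ⁻¹ * σ'`: going up a cover `s_i x ⋖ x` of `[σ, ρ]_L`, the image cover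
`f (s_i x) ⋖ f x` is again a left multiplication by some `s_j`, and descent preservation forces
`j = i`. Conversely, right translation by `g` is such an isomorphism exactly when `g⁻¹` keeps the
relative order of the constrained pairs of positions: those inverted by `ρ` but not by `σ`, and
those holding consecutive values in some element of the interval. Hence `min(C) = σ · L` and
`max(C) = ρ · L`, where `L` is the set of linear extensions of the constraint relation.

Transported by any element of the interval, the constraint relation satisfies the Björner–Wachs
condition: if `u → w` is a constraint and `v` lies strictly between `u` and `w`, there is a chain
of constraints `u → ⋯ → v` or `v → ⋯ → w`. Under this condition the linear extensions form a right
weak interval, from the linear extension that orders incomparable elements increasingly to the one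
that orders them decreasingly.
-/

open Equiv Relation

section Permutations
variable {m : ℕ}

theorem apply_lt_apply_of_not_lt {x : Perm (Fin m)} {p q : Fin m} (hpq : p ≠ q)
    (h : ¬ x q < x p) : x p < x q :=
  lt_of_le_of_ne (not_lt.1 h) (x.injective.ne hpq)

theorem lLE_iff {x y : Perm (Fin m)} : lLE x y ↔ ∀ p q, x p < x q → y q < y p → p < q := by
  refine ⟨fun h p q hx hy => ?_, fun h ⟨a, b⟩ ⟨hab, hx⟩ => ⟨hab, ?_⟩⟩
  · by_contra hpq
    have hqp : q < p := (not_lt.1 hpq).lt_of_ne (ne_of_apply_ne x hx.ne')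
    exact (h (a := (q, p)) ⟨hqp, hx⟩).2.asymm hy
  · by_contra hy
    exact (h b a hx (apply_lt_apply_of_not_lt hab.ne hy)).asymm hab

theorem eq_of_forall_lt_imp_lt {x y : Perm (Fin m)} (h : ∀ p q, x p < x q → y p < y q) :
    x = y := by
  have hmono : StrictMono (y ∘ x.symm) := fun u v huv => by
    simpa using h (x.symm u) (x.symm v) (by simpa using huv)
  ext p
  simpa using congrArg Fin.val (hmono.apply_eq (x := x p)).symm

theorem lLE_antisymm {x y : Perm (Fin m)} (hxy : lLE x y) (hyx : lLE y x) : x = y :=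
  eq_of_forall_lt_imp_lt fun p q hx => by
    by_contra hy
    have hy' := apply_lt_apply_of_not_lt (ne_of_apply_ne x hx.ne') hy
    exact (lLE_iff.1 hxy p q hx hy').asymm (lLE_iff.1 hyx q p hy' hx)

theorem len_eq_ncard (x : Perm (Fin m)) : len x = (InvL x).ncard := by
  rw [len, ← Set.ncard_coe_finset]
  congr 1
  ext
  simp [InvL]

/-- A value strictly between `y q` and `y p` sits, under `x`, above `x p` or below `x q`, which
gives a pair with the same property and a smaller gap. -/
theorem exists_lt_and_covBy_of_lt {x y : Perm (Fin m)} {p q : Fin m} (hx : x p < x q)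
    (hy : y q < y p) : ∃ p q, x p < x q ∧ y q ⋖ y p := by
  induction hd : (y p).val - (y q).val using Nat.strong_induction_on generalizing p q with
  | _ d ih =>
  by_cases hcov : y q ⋖ y p
  · exact ⟨p, q, hx, hcov⟩
  obtain ⟨v, hqv, hvp⟩ := (not_covBy_iff hy).1 hcov
  set c := y⁻¹ v
  have hyc : y c = v := y.apply_symm_apply v
  by_cases hpc : x p < x c
  · exact ih _ (by rw [← hd, hyc]; omega) hpc (hyc ▸ hvp) rfl
  · have hcq : x c < x q :=
      (apply_lt_apply_of_not_lt (fun h => hvp.ne (by rw [← hyc, h])) hpc).trans hx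
    exact ih _ (by rw [← hd, hyc]; omega) hcq (hyc ▸ hqv) rfl

theorem lLE_mul_right_iff {x y g : Perm (Fin m)} :
    lLE (x * g) (y * g) ↔ ∀ a b, x a < x b → y b < y a → g⁻¹ a < g⁻¹ b := by
  rw [lLE_iff]
  refine ⟨fun h a b hx hy => h _ _ (by simpa using hx) (by simpa using hy), fun h p q hx hy => ?_⟩
  simpa using h (g p) (g q) hx hy

theorem lLE_of_lLE_mul_right {x y z g : Perm (Fin m)} (hxy : lLE (x * g) (y * g))
    (hyz : lLE (y * g) (z * g)) (hxz : lLE x z) : lLE x y ∧ lLE y z := by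
  rw [lLE_mul_right_iff] at hxy hyz
  refine ⟨lLE_iff.2 fun a b hx hy => ?_, lLE_iff.2 fun a b hy hz => ?_⟩
  · rcases lt_or_gt_of_ne (z.injective.ne (ne_of_apply_ne x hx.ne)) with hz | hz
    · exact absurd (hyz b a hy hz) (hxy a b hx hy).asymm
    · exact lLE_iff.1 hxz a b hx hz
  · rcases lt_or_gt_of_ne (x.injective.ne (ne_of_apply_ne y hy.ne)) with hx | hx
    · exact lLE_iff.1 hxz a b hx hz
    · exact absurd (hxy b a hx hy) (hyz a b hy hz).asymm

theorem lt_of_lLE_of_lLE {σ x ρ : Perm (Fin m)} (hσx : lLE σ x) (hxρ : lLE x ρ) {p q : Fin m}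
    (hσ : σ p < σ q) (hρ : ρ p < ρ q) : x p < x q := by
  by_contra hx
  have hx := apply_lt_apply_of_not_lt (ne_of_apply_ne σ hσ.ne') hx
  exact (lLE_iff.1 hσx p q hσ hx).asymm (lLE_iff.1 hxρ q p hx hρ)

theorem lt_and_lt_of_lLE {σ x y ρ : Perm (Fin m)} (hσx : lLE σ x) (hxy : lLE x y)
    (hyρ : lLE y ρ) {a b : Fin m} (hx : x a < x b) (hy : y b < y a) : σ a < σ b ∧ ρ b < ρ a := by
  have hab := lLE_iff.1 hxy a b hx hy
  exact ⟨apply_lt_apply_of_not_lt hab.ne fun hσ => hab.asymm (lLE_iff.1 hσx b a hσ hx),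
    apply_lt_apply_of_not_lt hab.ne' fun hρ => hab.asymm (lLE_iff.1 hyρ b a hy hρ)⟩

end Permutations

section SimpleTranspositions
variable {n : ℕ}

theorem exists_castSucc_eq_of_covBy {a b : Fin (n + 1)} (h : a ⋖ b) :
    ∃ i : Fin n, i.castSucc = a ∧ i.succ = b := by
  have h' : a.val + 1 = b.val := Nat.covBy_iff_add_one_eq.1 (Fin.covBy_iff.1 h)
  exact ⟨⟨a.val, by omega⟩, rfl, Fin.ext (by simp [h'])⟩

theorem sgen_inv (i : Fin n) : (sgen i)⁻¹ = sgen i := swap_inv _ _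

theorem sgen_mul_sgen_mul (i : Fin n) (x : Perm (Fin (n + 1))) : sgen i * (sgen i * x) = x :=
  swap_mul_self_mul _ _ x

@[simp] theorem sgen_apply_castSucc (i : Fin n) : sgen i i.castSucc = i.succ :=
  swap_apply_left _ _

@[simp] theorem sgen_apply_succ (i : Fin n) : sgen i i.succ = i.castSucc :=
  swap_apply_right _ _

theorem sgen_apply_of_ne {i : Fin n} {v : Fin (n + 1)} (h₁ : v ≠ i.castSucc) (h₂ : v ≠ i.succ) :
    sgen i v = v :=
  swap_apply_of_ne_of_ne h₁ h₂

theorem sgen_mul_inv_apply (i : Fin n) (x : Perm (Fin (n + 1))) (v : Fin (n + 1)) :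
    (sgen i * x)⁻¹ v = x⁻¹ (sgen i v) := by
  rw [mul_inv_rev, sgen_inv, Perm.mul_apply]

theorem sgen_lt_sgen_iff {i : Fin n} {u v : Fin (n + 1)}
    (h₁ : ¬(u = i.castSucc ∧ v = i.succ)) (h₂ : ¬(u = i.succ ∧ v = i.castSucc)) :
    sgen i u < sgen i v ↔ u < v := by
  simp only [sgen, swap_apply_def]
  split_ifs <;> simp only [Fin.ext_iff, Fin.lt_def, Fin.val_castSucc, Fin.val_succ] at * <;> omega

theorem invL_sgen_mul {i : Fin n} {x : Perm (Fin (n + 1))} (h : x⁻¹ i.succ < x⁻¹ i.castSucc) :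
    InvL (sgen i * x) = InvL x \ {(x⁻¹ i.succ, x⁻¹ i.castSucc)} := by
  ext ⟨a, b⟩
  simp only [InvL, Set.mem_sdiff, Set.mem_ofPred_eq, Set.mem_singleton_iff, Prod.mk.injEq,
    Perm.mul_apply]
  by_cases hab : a = x⁻¹ i.succ ∧ b = x⁻¹ i.castSucc
  · obtain ⟨rfl, rfl⟩ := hab
    simp [sgen, Fin.castSucc_lt_succ.not_gt]
  by_cases hlt : a < b
  · rw [sgen_lt_sgen_iff]
    · tauto
    · rintro ⟨hb, ha⟩
      exact hab ⟨by simp [← ha], by simp [← hb]⟩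
    · rintro ⟨hb, ha⟩
      exact hlt.asymm (by simpa [← ha, ← hb] using h)
  · simp [hlt]

theorem len_sgen_mul {i : Fin n} {x : Perm (Fin (n + 1))} (h : x⁻¹ i.succ < x⁻¹ i.castSucc) :
    len (sgen i * x) + 1 = len x := by
  rw [len_eq_ncard, len_eq_ncard, invL_sgen_mul h]
  exact Set.ncard_sdiff_singleton_add_one ⟨h, by simp⟩

theorem mem_desL_iff {i : Fin n} {x : Perm (Fin (n + 1))} :
    i ∈ DesL x ↔ x⁻¹ i.succ < x⁻¹ i.castSucc := by
  refine ⟨fun hi => ?_, fun h => ?_⟩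
  · by_contra h
    have h' : (sgen i * x)⁻¹ i.succ < (sgen i * x)⁻¹ i.castSucc := by
      rw [sgen_mul_inv_apply, sgen_mul_inv_apply, sgen_apply_castSucc, sgen_apply_succ]
      exact apply_lt_apply_of_not_lt Fin.castSucc_lt_succ.ne h
    have hlen := len_sgen_mul h'
    rw [sgen_mul_sgen_mul] at hlen
    have hi : len (sgen i * x) < len x := hi
    omega
  · have hlen := len_sgen_mul h
    show len (sgen i * x) < len x
    omega

theorem notMem_desL_sgen_mul {i : Fin n} {x : Perm (Fin (n + 1))} (hi : i ∈ DesL x) :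
    i ∉ DesL (sgen i * x) := by
  rw [mem_desL_iff] at hi ⊢
  rw [sgen_mul_inv_apply, sgen_mul_inv_apply, sgen_apply_castSucc, sgen_apply_succ]
  exact hi.asymm

theorem mem_desL_sgen_mul {i k : Fin n} {x : Perm (Fin (n + 1))} (hi : i ∈ DesL x)
    (hk : k ∈ DesL x) (hki : k ≠ i) : k ∈ DesL (sgen i * x) := by
  rw [mem_desL_iff] at hi hk ⊢
  rw [sgen_mul_inv_apply, sgen_mul_inv_apply]
  have hki : k.val ≠ i.val := Fin.val_ne_of_ne hki
  by_cases hl : k.succ = i.castSucc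
  · rw [hl, sgen_apply_castSucc, sgen_apply_of_ne]
    · exact hi.trans (hl ▸ hk)
    all_goals simp only [ne_eq, Fin.ext_iff, Fin.val_castSucc, Fin.val_succ] at hl ⊢; omega
  by_cases hr : k.castSucc = i.succ
  · rw [hr, sgen_apply_succ, sgen_apply_of_ne]
    · exact (hr ▸ hk).trans hi
    all_goals simp only [ne_eq, Fin.ext_iff, Fin.val_castSucc, Fin.val_succ] at hr ⊢; omega
  rw [sgen_apply_of_ne, sgen_apply_of_ne]
  · exact hk
  all_goals simp only [ne_eq, Fin.ext_iff, Fin.val_castSucc, Fin.val_succ] at hl hr ⊢; omega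

theorem lLE_sgen_mul_self {i : Fin n} {x : Perm (Fin (n + 1))} (hi : i ∈ DesL x) :
    lLE (sgen i * x) x := by
  rw [lLE, invL_sgen_mul (mem_desL_iff.1 hi)]
  exact Set.sdiff_subset

theorem eq_or_eq_of_lLE_sgen_mul {i : Fin n} {x z : Perm (Fin (n + 1))} (hi : i ∈ DesL x)
    (h₁ : lLE (sgen i * x) z) (h₂ : lLE z x) : z = sgen i * x ∨ z = x := by
  rw [lLE, invL_sgen_mul (mem_desL_iff.1 hi)] at h₁
  by_cases hz : (x⁻¹ i.succ, x⁻¹ i.castSucc) ∈ InvL z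
  · exact Or.inr (lLE_antisymm h₂ ((Set.sdiff_singleton_subset_iff.1 h₁).trans
      (Set.insert_subset hz subset_rfl)))
  · refine Or.inl (lLE_antisymm ?_ ?_)
    · rw [lLE, invL_sgen_mul (mem_desL_iff.1 hi)]
      exact Set.subset_sdiff_singleton h₂ hz
    · rwa [lLE, invL_sgen_mul (mem_desL_iff.1 hi)]

theorem exists_mem_desL_lLE_sgen_mul {x y : Perm (Fin (n + 1))} (hxy : lLE x y) (hne : x ≠ y) :
    ∃ i ∈ DesL y, lLE x (sgen i * y) := by
  obtain ⟨p₀, q₀, hx₀, hy₀⟩ : ∃ p q, x p < x q ∧ y q < y p := by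
    by_contra! h
    exact hne (eq_of_forall_lt_imp_lt fun p q hx =>
      (h p q hx).lt_of_ne (y.injective.ne (ne_of_apply_ne x hx.ne)))
  obtain ⟨p, q, hx, hcov⟩ := exists_lt_and_covBy_of_lt hx₀ hy₀
  obtain ⟨i, hq, hp⟩ := exists_castSucc_eq_of_covBy hcov
  have hpi : y⁻¹ i.succ = p := hp ▸ y.symm_apply_apply p
  have hqi : y⁻¹ i.castSucc = q := hq ▸ y.symm_apply_apply q
  have hdes : y⁻¹ i.succ < y⁻¹ i.castSucc := hpi ▸ hqi ▸ lLE_iff.1 hxy p q hx hcov.lt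
  refine ⟨i, mem_desL_iff.2 hdes, ?_⟩
  rw [lLE, invL_sgen_mul hdes, hpi, hqi]
  exact Set.subset_sdiff_singleton hxy fun h => h.2.asymm hx

end SimpleTranspositions

section TieBreak
variable {α : Type*}

theorem mem_uIoo_iff_lt_iff_lt [LinearOrder α] {a b c : α} (ha : c ≠ a) (hb : c ≠ b) :
    c ∈ Set.uIoo a b ↔ (a < c ↔ c < b) := by
  simp only [Set.uIoo, Set.mem_Ioo, inf_lt_iff, lt_sup_iff]
  grind

theorem transGen_between [LinearOrder α] {r : α → α → Prop}
    (h : ∀ u v w, r u w → v ∈ Set.uIoo u w → TransGen r u v ∨ TransGen r v w) (u v w : α)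
    (huw : TransGen r u w) : v ∈ Set.uIoo u w → TransGen r u v ∨ TransGen r v w := by
  induction huw generalizing v with
  | single huw => exact h _ v _ huw
  | @tail z w huz hzw ih =>
    intro hv
    by_cases hvz : v = z
    · exact Or.inl (hvz ▸ huz)
    by_cases hv' : v ∈ Set.uIoo u z
    · exact (ih v hv').imp_right (·.tail hzw)
    have hv'' : v ∈ Set.uIoo z w := by
      simp only [Set.uIoo, Set.mem_Ioo, inf_lt_iff, lt_sup_iff] at *
      grind
    exact (h z v w hzw hv'').imp_left huz.trans

def tieBreak (P t : α → α → Prop) (u v : α) : Prop :=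
  P u v ∨ (¬ P v u ∧ t u v)

theorem isStrictTotalOrder_tieBreak {P t : α → α → Prop} [IsStrictOrder α P]
    [IsStrictTotalOrder α t] (hP : ∀ u v w, P u w → t w v → t v u → P u v ∨ P v w) :
    IsStrictTotalOrder α (tieBreak P t) where
  irrefl u h := h.elim (irrefl u) fun h => irrefl u h.2
  trichotomous u v huv hvu := by
    simp only [tieBreak, not_or, not_and] at huv hvu
    exact Std.Trichotomous.trichotomous (r := t) u v (huv.2 hvu.1) (hvu.2 huv.1)
  trans u v w huv hvw := by
    have hvu : ¬ P v u := huv.elim (asymm ·) And.left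
    have hwv : ¬ P w v := hvw.elim (asymm ·) And.left
    by_cases huw : P u w
    · exact Or.inl huw
    refine Or.inr ⟨fun hwu => ?_, ?_⟩
    · rcases huv with huv | ⟨-, htuv⟩
      · exact hwv (_root_.trans hwu huv)
      rcases hvw with hvw | ⟨-, htvw⟩
      · exact hvu (_root_.trans hvw hwu)
      exact (hP w v u hwu htuv htvw).elim hwv hvu
    rcases trichotomous_of t u w with htuw | rfl | htwu
    · exact htuw
    · exact absurd (huv.resolve_left hwv).2 (asymm (hvw.resolve_left hvu).2)
    rcases huv with huv | ⟨-, htuv⟩ <;> rcases hvw with hvw | ⟨-, htvw⟩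
    · exact absurd (_root_.trans huv hvw) huw
    · exact (hwv ((hP u w v huv htvw htwu).resolve_left huw)).elim
    · exact (huw ((hP v u w hvw htwu htuv).resolve_left hvu)).elim
    · exact absurd (_root_.trans (_root_.trans htuv htvw) htwu) (irrefl u)

end TieBreak

section LinearExtensions
variable {m : ℕ}

open Finset in
theorem exists_perm_lt_iff (r : Fin m → Fin m → Prop) [IsStrictTotalOrder (Fin m) r] :
    ∃ e : Perm (Fin m), ∀ u v, e u < e v ↔ r u v := by
  classical
  have rank_mono : ∀ {u v}, r u v → #{w | r w u} < #{w | r w v} := fun {u v} huv =>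
    card_lt_card <| (Finset.ssubset_iff_of_subset fun w hw => by
      simp only [mem_filter, mem_univ, true_and] at hw ⊢; exact _root_.trans hw huv).2
      ⟨u, by simpa using huv, by simpa using irrefl u⟩
  have rank_lt : ∀ u, #{w | r w u} < m := fun u => by
    simpa using Finset.card_lt_card
      (filter_ssubset.2 ⟨u, mem_univ _, irrefl u⟩ : ({w | r w u} : Finset (Fin m)) ⊂ univ)
  let e : Fin m → Fin m := fun u => ⟨_, rank_lt u⟩
  have he : ∀ u v, e u < e v ↔ r u v := fun u v => by
    refine ⟨fun h => ?_, rank_mono⟩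
    rcases trichotomous_of r u v with huv | rfl | hvu
    · exact huv
    · exact absurd h (lt_irrefl _)
    · exact absurd (rank_mono hvu) (Fin.lt_def.1 h).not_gt
  have hinj : Function.Injective e := fun u v huv => by
    rcases trichotomous_of r u v with h | h | h
    · exact absurd huv ((he u v).2 h).ne
    · exact h
    · exact absurd huv ((he v u).2 h).ne'
  exact ⟨Equiv.ofBijective e (Finite.injective_iff_bijective.1 hinj), he⟩

theorem mem_invR {x : Perm (Fin m)} {u w : Fin m} :
    (u, w) ∈ InvR x ↔ w < u ∧ x⁻¹ u < x⁻¹ w :=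
  Iff.rfl

/-- `γ⁻¹ u` is the position of `u` in the word `γ 0 γ 1 ⋯`. -/
def linearExtensions (r : Fin m → Fin m → Prop) : Set (Perm (Fin m)) :=
  {γ | ∀ u w, r u w → γ⁻¹ u < γ⁻¹ w}

theorem inv_lt_inv_of_transGen {r : Fin m → Fin m → Prop} {γ : Perm (Fin m)}
    (hγ : γ ∈ linearExtensions r) {u w : Fin m} (h : TransGen r u w) : γ⁻¹ u < γ⁻¹ w := by
  induction h with
  | single h => exact hγ _ _ h
  | tail _ h ih => exact ih.trans (hγ _ _ h)

theorem image_mul_left_linearExtensions (x : Perm (Fin m)) (r : Fin m → Fin m → Prop) :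
    (x * ·) '' linearExtensions r = linearExtensions fun u w => r (x⁻¹ u) (x⁻¹ w) := by
  ext γ
  refine ⟨?_, fun hγ => ⟨x⁻¹ * γ, fun a b hab => ?_, mul_inv_cancel_left x γ⟩⟩
  · rintro ⟨g, hg, rfl⟩ u w huw
    simpa [mul_inv_rev] using hg _ _ huw
  · simpa [mul_inv_rev] using hγ (x a) (x b) (by simpa using hab)

theorem exists_linearExtensions_eq_rInterval (r : Fin m → Fin m → Prop)
    (hne : (linearExtensions r).Nonempty)
    (hbetw : ∀ u v w, r u w → v ∈ Set.uIoo u w → TransGen r u v ∨ TransGen r v w) :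
    ∃ a b, rLE a b ∧ linearExtensions r = rInterval a b := by
  obtain ⟨γ₀, hγ₀⟩ := hne
  have : IsStrictOrder (Fin m) (TransGen r) :=
    { irrefl := fun u h => (inv_lt_inv_of_transGen hγ₀ h).false
      trans := fun _ _ _ => TransGen.trans }
  have hbetw' := transGen_between hbetw
  have : IsStrictTotalOrder (Fin m) (tieBreak (TransGen r) (· < ·)) :=
    isStrictTotalOrder_tieBreak fun u v w huw hwv hvu =>
      hbetw' u v w huw (Set.mem_uIoo_of_gt hwv hvu)
  have : IsStrictTotalOrder (Fin m) (tieBreak (TransGen r) (· > ·)) :=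
    isStrictTotalOrder_tieBreak fun u v w huw hwv hvu =>
      hbetw' u v w huw (Set.mem_uIoo_of_lt hvu hwv)
  obtain ⟨e₁, he₁⟩ := exists_perm_lt_iff (tieBreak (TransGen r) (· < ·))
  obtain ⟨e₂, he₂⟩ := exists_perm_lt_iff (tieBreak (TransGen r) (· > ·))
  have hmin : ∀ u w, (u, w) ∈ InvR e₁⁻¹ ↔ w < u ∧ TransGen r u w := fun u w => by
    rw [mem_invR, inv_inv, he₁, tieBreak]
    exact ⟨fun ⟨hwu, h⟩ => ⟨hwu, h.resolve_right fun h => h.2.asymm hwu⟩,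
      fun ⟨hwu, h⟩ => ⟨hwu, Or.inl h⟩⟩
  have hmax : ∀ u w, (u, w) ∈ InvR e₂⁻¹ ↔ w < u ∧ ¬ TransGen r w u := fun u w => by
    rw [mem_invR, inv_inv, he₂, tieBreak]
    exact ⟨fun ⟨hwu, h⟩ => ⟨hwu, h.elim (asymm ·) And.left⟩,
      fun ⟨hwu, h⟩ => ⟨hwu, Or.inr ⟨h, hwu⟩⟩⟩
  have key : linearExtensions r = rInterval e₁⁻¹ e₂⁻¹ := by
    ext γ
    refine ⟨fun hγ => ⟨fun ⟨u, w⟩ h => ?_, fun ⟨u, w⟩ h => ?_⟩, fun ⟨h₁, h₂⟩ u w huw => ?_⟩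
    · obtain ⟨hwu, h⟩ := (hmin u w).1 h
      exact ⟨hwu, inv_lt_inv_of_transGen hγ h⟩
    · exact (hmax u w).2 ⟨h.1, fun h' => (inv_lt_inv_of_transGen hγ h').asymm h.2⟩
    rcases lt_trichotomy u w with hlt | rfl | hgt
    · by_contra hγ
      exact ((hmax w u).1 (h₂ ⟨hlt, apply_lt_apply_of_not_lt hlt.ne' hγ⟩)).2 (.single huw)
    · exact absurd (TransGen.single huw) (irrefl u)
    · exact (h₁ ((hmin u w).2 ⟨hgt, .single huw⟩)).2
  exact ⟨_, _, fun p hp => (key ▸ hγ₀).2 ((key ▸ hγ₀).1 hp), key⟩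

end LinearExtensions

section Constraints
variable {m n : ℕ}

/-- The first kind of pair is needed for `x ↦ x * g` to preserve the order of `[σ, ρ]_L`, the
second for it to preserve descents. -/
def Constraint (σ ρ : Perm (Fin m)) (a b : Fin m) : Prop :=
  (σ a < σ b ∧ ρ b < ρ a) ∨ (a < b ∧ ∃ x ∈ lInterval σ ρ, x a ⋖ x b ∨ x b ⋖ x a)

theorem Constraint.lt {σ ρ : Perm (Fin m)} (h : lLE σ ρ) {a b : Fin m}
    (hab : Constraint σ ρ a b) : a < b :=
  hab.elim (fun ⟨hσ, hρ⟩ => lLE_iff.1 h a b hσ hρ) And.left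

theorem desL_mul_eq_iff {x g : Perm (Fin (n + 1))} :
    DesL (x * g) = DesL x ↔ ∀ a b, x a ⋖ x b → (g⁻¹ b < g⁻¹ a ↔ b < a) := by
  simp only [Set.ext_iff, mem_desL_iff, mul_inv_rev, Perm.mul_apply]
  refine ⟨fun h a b hab => ?_, fun h i => h _ _ (by simp)⟩
  obtain ⟨i, ha, hb⟩ := exists_castSucc_eq_of_covBy hab
  simpa [ha, hb] using h i

theorem inv_lt_inv_iff_of_covBy {σ ρ g x : Perm (Fin m)}
    (hg : g ∈ linearExtensions (Constraint σ ρ)) (hx : x ∈ lInterval σ ρ) {a b : Fin m}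
    (h : x a ⋖ x b) : g⁻¹ b < g⁻¹ a ↔ b < a := by
  rcases lt_or_gt_of_ne (ne_of_apply_ne x h.lt.ne) with hab | hba
  · exact iff_of_false (hg a b (Or.inr ⟨hab, x, hx, Or.inl h⟩)).asymm hab.asymm
  · exact iff_of_true (hg b a (Or.inr ⟨hba, x, hx, Or.inr h⟩)) hba

theorem dpEquiv_mul_right {σ ρ g : Perm (Fin (n + 1))} (h : lLE σ ρ)
    (hg : g ∈ linearExtensions (Constraint σ ρ)) : DPEquiv σ ρ (σ * g) (ρ * g) := by
  have hσ : σ ∈ lInterval σ ρ := ⟨subset_rfl, h⟩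
  have hρ : ρ ∈ lInterval σ ρ := ⟨h, subset_rfl⟩
  have hmono : ∀ x ∈ lInterval σ ρ, ∀ y ∈ lInterval σ ρ, lLE x y → lLE (x * g) (y * g) :=
    fun x hx y hy hxy => lLE_mul_right_iff.2 fun a b ha hb =>
      hg a b (Or.inl (lt_and_lt_of_lLE hx.1 hxy hy.2 ha hb))
  have hrefl : ∀ x ∈ lInterval σ ρ, ∀ y ∈ lInterval σ ρ, lLE (x * g) (y * g) → lLE x y :=
    fun x hx y hy hxy => (lLE_of_lLE_mul_right hxy (hmono y hy ρ hρ hy.2) hx.2).1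
  have hsurj : Set.SurjOn (· * g) (lInterval σ ρ) (lInterval (σ * g) (ρ * g)) := fun δ hδ =>
    ⟨δ * g⁻¹, lLE_of_lLE_mul_right (g := g) (by simpa using hδ.1) (by simpa using hδ.2) h,
      inv_mul_cancel_right δ g⟩
  refine ⟨h, hmono σ hσ ρ hρ h, (· * g), ⟨fun x hx => ⟨hmono σ hσ x hx hx.1, hmono x hx ρ hρ hx.2⟩,
    fun x _ y _ => mul_right_cancel, hsurj⟩, fun x hx y hy => ⟨hmono x hx y hy, hrefl x hx y hy⟩,
    fun x hx => desL_mul_eq_iff.2 fun a b hab => inv_lt_inv_iff_of_covBy hg hx hab⟩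

end Constraints

section Isomorphisms
variable {n : ℕ} {σ ρ σ' ρ' : Perm (Fin (n + 1))} {f : Perm (Fin (n + 1)) → Perm (Fin (n + 1))}

theorem apply_eq_mul_of_apply_sgen_mul_eq
    (hbij : Set.BijOn f (lInterval σ ρ) (lInterval σ' ρ'))
    (hord : ∀ x ∈ lInterval σ ρ, ∀ y ∈ lInterval σ ρ, (lLE x y ↔ lLE (f x) (f y)))
    (hdes : ∀ x ∈ lInterval σ ρ, DesL (f x) = DesL x) {x g : Perm (Fin (n + 1))} {i : Fin n}
    (hx : x ∈ lInterval σ ρ) (hi : i ∈ DesL x) (hy : sgen i * x ∈ lInterval σ ρ)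
    (hfy : f (sgen i * x) = sgen i * x * g) : f x = x * g := by
  set y := sgen i * x
  have hne : f y ≠ f x := fun h =>
    notMem_desL_sgen_mul hi (by rw [← hdes y hy, h, hdes x hx]; exact hi)
  obtain ⟨j, hj, hj'⟩ :=
    exists_mem_desL_lLE_sgen_mul ((hord y hy x hx).1 (lLE_sgen_mul_self hi)) hne
  obtain ⟨z, hz, hfz⟩ := hbij.surjOn
    ⟨(hbij.mapsTo hy).1.trans hj', (lLE_sgen_mul_self hj).trans (hbij.mapsTo hx).2⟩
  have hzy : z = y := by
    refine (eq_or_eq_of_lLE_sgen_mul hi ((hord y hy z hz).2 (hfz ▸ hj'))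
      ((hord z hz x hx).2 (hfz ▸ lLE_sgen_mul_self hj))).resolve_right fun h => ?_
    exact notMem_desL_sgen_mul hj (by rw [← hfz, h]; exact hj)
  rw [hzy] at hfz
  have hji : j = i := by
    by_contra hji
    have := mem_desL_sgen_mul hi (hdes x hx ▸ hj) hji
    rw [← hdes y hy, hfz] at this
    exact notMem_desL_sgen_mul hj this
  calc f x = sgen i * f y := by rw [hfz, ← hji, sgen_mul_sgen_mul]
    _ = x * g := by rw [hfy, mul_assoc, sgen_mul_sgen_mul]

theorem apply_eq_mul_of_isIso
    (hbij : Set.BijOn f (lInterval σ ρ) (lInterval σ' ρ'))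
    (hord : ∀ x ∈ lInterval σ ρ, ∀ y ∈ lInterval σ ρ, (lLE x y ↔ lLE (f x) (f y)))
    (hdes : ∀ x ∈ lInterval σ ρ, DesL (f x) = DesL x) {x : Perm (Fin (n + 1))}
    (hx : x ∈ lInterval σ ρ) : f x = x * (σ⁻¹ * f σ) := by
  induction hl : len x using Nat.strong_induction_on generalizing x with
  | _ k ih =>
  by_cases hσx : σ = x
  · rw [← hσx, mul_inv_cancel_left]
  obtain ⟨i, hi, hσi⟩ := exists_mem_desL_lLE_sgen_mul hx.1 hσx
  have hy : sgen i * x ∈ lInterval σ ρ := ⟨hσi, (lLE_sgen_mul_self hi).trans hx.2⟩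
  have hlen := len_sgen_mul (mem_desL_iff.1 hi)
  exact apply_eq_mul_of_apply_sgen_mul_eq hbij hord hdes hx hi hy
    (by rw [ih _ (by omega) hy rfl, mul_assoc])

theorem apply_left_eq_of_isIso (hσρ : lLE σ ρ) (hσρ' : lLE σ' ρ')
    (hbij : Set.BijOn f (lInterval σ ρ) (lInterval σ' ρ'))
    (hord : ∀ x ∈ lInterval σ ρ, ∀ y ∈ lInterval σ ρ, (lLE x y ↔ lLE (f x) (f y))) :
    f σ = σ' := by
  obtain ⟨z, hz, hfz⟩ := hbij.surjOn ⟨subset_rfl, hσρ'⟩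
  exact lLE_antisymm (hfz ▸ (hord σ ⟨subset_rfl, hσρ⟩ z hz).1 hz.1)
    (hbij.mapsTo ⟨subset_rfl, hσρ⟩).1

theorem apply_right_eq_of_isIso (hσρ : lLE σ ρ) (hσρ' : lLE σ' ρ')
    (hbij : Set.BijOn f (lInterval σ ρ) (lInterval σ' ρ'))
    (hord : ∀ x ∈ lInterval σ ρ, ∀ y ∈ lInterval σ ρ, (lLE x y ↔ lLE (f x) (f y))) :
    f ρ = ρ' := by
  obtain ⟨z, hz, hfz⟩ := hbij.surjOn ⟨hσρ', subset_rfl⟩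
  exact lLE_antisymm (hbij.mapsTo ⟨hσρ, subset_rfl⟩).2
    (hfz ▸ (hord z hz ρ ⟨hσρ, subset_rfl⟩).1 hz.2)

theorem mem_linearExtensions_of_dpEquiv (h : DPEquiv σ ρ σ' ρ') :
    σ⁻¹ * σ' ∈ linearExtensions (Constraint σ ρ) ∧ ρ' = ρ * (σ⁻¹ * σ') := by
  obtain ⟨hσρ, hσρ', f, hbij, hord, hdes⟩ := h
  have hfσ := apply_left_eq_of_isIso hσρ hσρ' hbij hord
  have hf : ∀ x ∈ lInterval σ ρ, f x = x * (σ⁻¹ * σ') := fun x hx =>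
    hfσ ▸ apply_eq_mul_of_isIso hbij hord hdes hx
  have hρ' : ρ' = ρ * (σ⁻¹ * σ') := by
    rw [← apply_right_eq_of_isIso hσρ hσρ' hbij hord, hf ρ ⟨hσρ, subset_rfl⟩]
  refine ⟨fun a b hab => ?_, hρ'⟩
  rcases hab with ⟨hσ, hρ⟩ | ⟨hab, x, hx, hcov⟩
  · rw [← mul_inv_cancel_left σ σ', hρ'] at hσρ'
    exact lLE_mul_right_iff.1 hσρ' a b hσ hρ
  · have hdx := desL_mul_eq_iff.1 (hf x hx ▸ hdes x hx)
    rcases hcov with hcov | hcov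
    · exact apply_lt_apply_of_not_lt hab.ne fun h => hab.asymm ((hdx a b hcov).1 h)
    · exact (hdx b a hcov).2 hab

end Isomorphisms

section Betweenness
variable {m : ℕ} {σ ρ : Perm (Fin m)}

theorem constraint_or_constraint_of_not_lt_iff_lt {x y : Perm (Fin m)} (hx : x ∈ lInterval σ ρ)
    (hy : y ∈ lInterval σ ρ) {p q : Fin m} (h : ¬(x p < x q ↔ y p < y q)) :
    Constraint σ ρ p q ∨ Constraint σ ρ q p := by
  have hpq : p ≠ q := by rintro rfl; simp at h
  rcases lt_or_gt_of_ne (σ.injective.ne hpq) with hσ | hσ <;>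
    rcases lt_or_gt_of_ne (ρ.injective.ne hpq) with hρ | hρ
  · exact absurd (iff_of_true (lt_of_lLE_of_lLE hx.1 hx.2 hσ hρ)
      (lt_of_lLE_of_lLE hy.1 hy.2 hσ hρ)) h
  · exact Or.inl (Or.inl ⟨hσ, hρ⟩)
  · exact Or.inr (Or.inl ⟨hσ, hρ⟩)
  · exact absurd (iff_of_false (lt_of_lLE_of_lLE hx.1 hx.2 hσ hρ).asymm
      (lt_of_lLE_of_lLE hy.1 hy.2 hσ hρ).asymm) h

theorem transGen_constraint_of_mem_uIoo_of_notMem_uIoo {x y : Perm (Fin m)}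
    (hx : x ∈ lInterval σ ρ) (hy : y ∈ lInterval σ ρ) {a b c : Fin m}
    (hab : Constraint σ ρ a b) (hxc : x c ∈ Set.uIoo (x a) (x b))
    (hyc : y c ∉ Set.uIoo (y a) (y b)) :
    TransGen (Constraint σ ρ) a c ∨ TransGen (Constraint σ ρ) c b := by
  have hca : c ≠ a := fun h => Set.left_notMem_uIoo (h ▸ hxc)
  have hcb : c ≠ b := fun h => Set.right_notMem_uIoo (h ▸ hxc)
  rw [mem_uIoo_iff_lt_iff_lt (x.injective.ne hca) (x.injective.ne hcb)] at hxc
  rw [mem_uIoo_iff_lt_iff_lt (y.injective.ne hca) (y.injective.ne hcb)] at hyc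
  by_cases hac : x a < x c ↔ y a < y c
  · have hcb' : ¬(x c < x b ↔ y c < y b) := fun hcb' =>
      hyc (by rw [← hac, ← hcb']; exact hxc)
    rcases constraint_or_constraint_of_not_lt_iff_lt hx hy hcb' with h | h
    · exact Or.inr (.single h)
    · exact Or.inl (.tail (.single hab) h)
  · rcases constraint_or_constraint_of_not_lt_iff_lt hx hy hac with h | h
    · exact Or.inl (.single h)
    · exact Or.inr (.head h (.single hab))

theorem transGen_constraint_of_mem_uIoo (hσρ : lLE σ ρ) {x : Perm (Fin m)}
    (hx : x ∈ lInterval σ ρ) {a b c : Fin m} (hab : Constraint σ ρ a b)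
    (hc : x c ∈ Set.uIoo (x a) (x b)) :
    TransGen (Constraint σ ρ) a c ∨ TransGen (Constraint σ ρ) c b := by
  rcases id hab with ⟨hσ, hρ⟩ | ⟨-, y, hy, hcov⟩
  · by_cases hσc : σ c ∈ Set.uIoo (σ a) (σ b)
    · rw [Set.uIoo_of_lt hσ] at hσc
      rcases lt_or_gt_of_ne (ρ.injective.ne (ne_of_apply_ne σ hσc.1.ne')) with hρc | hρc
      · exact Or.inl (.single (Or.inl ⟨hσc.1, hρc⟩))
      · exact Or.inr (.single (Or.inl ⟨hσc.2, hρ.trans hρc⟩))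
    · exact transGen_constraint_of_mem_uIoo_of_notMem_uIoo hx ⟨subset_rfl, hσρ⟩ hab hc hσc
  · refine transGen_constraint_of_mem_uIoo_of_notMem_uIoo hx hy hab hc ?_
    rcases hcov with hcov | hcov
    · rw [Set.uIoo_of_lt hcov.lt, hcov.Ioo_eq]; exact id
    · rw [Set.uIoo_of_gt hcov.lt, hcov.Ioo_eq]; exact id

theorem exists_image_mul_left_eq_rInterval (hσρ : lLE σ ρ) {x : Perm (Fin m)}
    (hx : x ∈ lInterval σ ρ) :
    ∃ a b, rLE a b ∧ (x * ·) '' linearExtensions (Constraint σ ρ) = rInterval a b := by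
  rw [image_mul_left_linearExtensions]
  refine exists_linearExtensions_eq_rInterval _ ⟨x, fun u w h => h.lt hσρ⟩
    fun u v w huw hv => ?_
  have hlift := TransGen.lift (r := Constraint σ ρ)
    (p := fun u w => Constraint σ ρ (x⁻¹ u) (x⁻¹ w)) x
    fun a b h => by simpa [Function.onFun] using h
  have := transGen_constraint_of_mem_uIoo hσρ hx huw (c := x⁻¹ v) (by simpa using hv)
  simpa [Function.onFun] using this.imp (hlift _ _) (hlift _ _)

end Betweenness

/-- For the equivalence class `C` of a left weak Bruhat interval `[σ,ρ]_L` under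
descent-preserving isomorphism, both `min(C)` (the set of minima of intervals in `C`)
and `max(C)` (the set of maxima) are right weak Bruhat intervals. -/
theorem minC_maxC_are_right_intervals {n : ℕ} (σ ρ : Equiv.Perm (Fin (n + 1)))
    (h : lLE σ ρ) :
    (∃ a b, rLE a b ∧ {a' | ∃ b', DPEquiv σ ρ a' b'} = rInterval a b) ∧
    (∃ a b, rLE a b ∧ {b' | ∃ a', DPEquiv σ ρ a' b'} = rInterval a b) := by
  have hmin : {a' | ∃ b', DPEquiv σ ρ a' b'} = (σ * ·) '' linearExtensions (Constraint σ ρ) := by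
    ext a'
    refine ⟨fun ⟨b', hd⟩ => ⟨_, (mem_linearExtensions_of_dpEquiv hd).1,
      mul_inv_cancel_left σ a'⟩, ?_⟩
    rintro ⟨g, hg, rfl⟩
    exact ⟨_, dpEquiv_mul_right h hg⟩
  have hmax : {b' | ∃ a', DPEquiv σ ρ a' b'} = (ρ * ·) '' linearExtensions (Constraint σ ρ) := by
    ext b'
    refine ⟨fun ⟨a', hd⟩ => ⟨_, (mem_linearExtensions_of_dpEquiv hd).1,
      (mem_linearExtensions_of_dpEquiv hd).2.symm⟩, ?_⟩
    rintro ⟨g, hg, rfl⟩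
    exact ⟨_, dpEquiv_mul_right h hg⟩
  rw [hmin, hmax]
  exact ⟨exists_image_mul_left_eq_rInterval h ⟨subset_rfl, h⟩,
    exists_image_mul_left_eq_rInterval h ⟨h, subset_rfl⟩⟩
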